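/- arXiv:1402.6074 — 2 statements merged into one kernel-verified Lean document; each statement's English description precedes it below -/
import Mathlib

section
/- Let p ≥ 7 be an odd prime. For all integers i ≥ 2 and k ≥ 0 with i + k ≤ p, the congruence 2(k + 2i − 2)p − 2k − 1 ≡ 4p − 3 (mod 2p² − 2p − 2) holds if and only if k = 2 and 2i = p + 1. -/
/-!
The two sides differ by `2x` with `x = p (k + 2i - 4) - (k - 1)` and the modulus is `2N` with
`N = p² - p - 1`, so the congruence says `N ∣ x`. The constraints on `i, k` give `0 < x < 2N`,
hence `x = N`, i.e. `p (k + 2i - 3 - p) = k - 2`; as `|k - 2| < p`, this forces `k = 2` and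
then `2i = p + 1`.
-/

namespace Int

lemma eq_of_dvd_of_pos_of_lt_two_mul {n x : ℤ} (hn : n ∣ x) (hx : 0 < x) (hxn : x < 2 * n) :
    x = n := by
  have hdvd : n ∣ x - n := dvd_sub hn dvd_rfl
  have hlt : |x - n| < n := abs_lt.2 ⟨by linarith [le_of_dvd hx hn], by linarith⟩
  linarith [eq_zero_of_abs_lt_dvd hdvd hlt]

lemma eq_zero_of_mul_eq_of_abs_lt {p a b : ℤ} (h : p * a = b) (hb : |b| < p) : b = 0 :=
  eq_zero_of_abs_lt_dvd ⟨a, h.symm⟩ hb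

end Int

lemma modEq_four_mul_sub_three_iff_dvd (p i k : ℤ) :
    2 * (k + 2 * i - 2) * p - 2 * k - 1 ≡ 4 * p - 3 [ZMOD 2 * p ^ 2 - 2 * p - 2] ↔
      p ^ 2 - p - 1 ∣ p * (k + 2 * i - 4) - (k - 1) := by
  rw [Int.modEq_iff_dvd,
    show 4 * p - 3 - (2 * (k + 2 * i - 2) * p - 2 * k - 1)
      = 2 * -(p * (k + 2 * i - 4) - (k - 1)) by ring,
    show 2 * p ^ 2 - 2 * p - 2 = 2 * (p ^ 2 - p - 1) by ring,
    mul_dvd_mul_iff_left two_ne_zero, dvd_neg]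

lemma sq_sub_sub_one_dvd_iff {p i k : ℤ} (hp : 3 ≤ p) (hi : 2 ≤ i) (hk : 0 ≤ k) (hik : i + k ≤ p) :
    p ^ 2 - p - 1 ∣ p * (k + 2 * i - 4) - (k - 1) ↔ k = 2 ∧ 2 * i = p + 1 := by
  constructor
  · intro hdvd
    have hpos : 0 < p * (k + 2 * i - 4) - (k - 1) := by nlinarith
    have hup : p * (k + 2 * i - 4) - (k - 1) < 2 * (p ^ 2 - p - 1) := by nlinarith
    have hx := Int.eq_of_dvd_of_pos_of_lt_two_mul hdvd hpos hup
    have hk2 : k - 2 = 0 :=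
      Int.eq_zero_of_mul_eq_of_abs_lt (p := p) (a := k + 2 * i - 3 - p) (by linear_combination hx)
        (abs_lt.2 ⟨by linarith, by linarith⟩)
    have hmul : p * (2 * i - 1 - p) = 0 := by linear_combination hx - (p - 1) * hk2
    have h2i : 2 * i - 1 - p = 0 := (mul_eq_zero.1 hmul).resolve_left (by omega)
    exact ⟨by linarith, by linarith⟩
  · rintro ⟨rfl, hi⟩
    exact ⟨1, by linear_combination p * hi⟩

theorem stmt_6_general (p : ℕ) (hp7 : 7 ≤ p) :
    ∀ i k : ℤ, 2 ≤ i → 0 ≤ k → i + k ≤ (p : ℤ) →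
      ((2 * (k + 2 * i - 2) * (p : ℤ) - 2 * k - 1 ≡ 4 * (p : ℤ) - 3
          [ZMOD 2 * (p : ℤ) ^ 2 - 2 * (p : ℤ) - 2]) ↔
        (k = 2 ∧ 2 * i = (p : ℤ) + 1)) := by
  intro i k hi hk hik
  rw [modEq_four_mul_sub_three_iff_dvd]
  exact sq_sub_sub_one_dvd_iff (by omega) hi hk hik

/-- For p ≥ 7 odd prime: for i ≥ 2, k ≥ 0 with i + k ≤ p, the congruence
2(k + 2i − 2)p − 2k − 1 ≡ 4p − 3 (mod 2p² − 2p − 2) holds iff k = 2 and 2i = p + 1. -/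
theorem stmt_6 (p : ℕ) (hp : Nat.Prime p) (hodd : Odd p) (hp7 : 7 ≤ p) :
    ∀ i k : ℤ, 2 ≤ i → 0 ≤ k → i + k ≤ (p : ℤ) →
      ((2 * (k + 2 * i - 2) * (p : ℤ) - 2 * k - 1 ≡ 4 * (p : ℤ) - 3
          [ZMOD 2 * (p : ℤ) ^ 2 - 2 * (p : ℤ) - 2]) ↔
        (k = 2 ∧ 2 * i = (p : ℤ) + 1)) :=
  stmt_6_general p hp7
end

section
/- Let p ≥ 7 be an odd prime. For all integers j, k with 0 ≤ j ≤ p − 1 and 1 ≤ k ≤ p − 1, the congruence 2(j + k)p + 2(j − k) ≡ 2p (mod 2p² − 2p − 2) holds if and only if j = (p − 1)/2 and k = (p + 1)/2. -/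
/-!
Halving the modulus, the congruence says that `p² - p - 1` divides
`x = (j + k - 1) p + (j - k)`. The ranges of `j` and `k` confine `x` strictly between
`-(p² - p - 1)` and `2 (p² - p - 1)`, so `x = 0` or `x = p² - p - 1 = (p - 1) p - 1`.
Since `|j - k| < p`, both equations can be read off "digit by digit" in base `p`:
`x = 0` forces `j = k` and `j + k = 1`, impossible, while `x = (p - 1) p - 1` forces
`j - k = -1` and `j + k = p`.
-/

namespace Int

lemma eq_zero_and_eq_zero_of_mul_add_eq_zero {a p r : ℤ} (h : a * p + r = 0) (hr : |r| < p) :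
    a = 0 ∧ r = 0 := by
  have hr0 : r = 0 := eq_zero_of_abs_lt_dvd ⟨-a, by linarith⟩ hr
  have hp : p ≠ 0 := (lt_of_le_of_lt (abs_nonneg r) hr).ne'
  subst hr0
  exact ⟨by simpa [hp] using h, rfl⟩

lemma eq_zero_or_eq_of_dvd_of_neg_lt_of_lt_two_mul {m x : ℤ} (h : m ∣ x) (hlo : -m < x)
    (hhi : x < 2 * m) : x = 0 ∨ x = m := by
  obtain ⟨t, rfl⟩ := h
  have hm : 0 < m := by linarith
  have ht₀ : -1 < t := by nlinarith
  have ht₂ : t < 2 := by nlinarith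
  interval_cases t <;> simp

end Int

section

variable {p j k : ℤ}

lemma modEq_two_mul_iff_dvd :
    2 * (j + k) * p + 2 * (j - k) ≡ 2 * p [ZMOD 2 * p ^ 2 - 2 * p - 2] ↔
      p ^ 2 - p - 1 ∣ (j + k - 1) * p + (j - k) := by
  rw [Int.modEq_iff_dvd,
    show 2 * p - (2 * (j + k) * p + 2 * (j - k)) = 2 * -((j + k - 1) * p + (j - k)) by ring,
    show 2 * p ^ 2 - 2 * p - 2 = 2 * (p ^ 2 - p - 1) by ring,
    mul_dvd_mul_iff_left two_ne_zero, dvd_neg]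

lemma neg_lt_mul_add_sub (hj₀ : 0 ≤ j) (hk₁ : 1 ≤ k) (hk₂ : k ≤ p - 1) (hp : 3 ≤ p) :
    -(p ^ 2 - p - 1) < (j + k - 1) * p + (j - k) := by
  nlinarith

lemma mul_add_sub_lt (hj₁ : j ≤ p - 1) (hk₂ : k ≤ p - 1) (hp : 3 ≤ p) :
    (j + k - 1) * p + (j - k) < 2 * (p ^ 2 - p - 1) := by
  nlinarith [mul_nonneg (by linarith : 0 ≤ p - 1 - j) (by linarith : 0 ≤ p + 1),
    mul_nonneg (by linarith : 0 ≤ p - 1 - k) (by linarith : 0 ≤ p - 1)]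

theorem modEq_two_mul_iff_of_odd (hj₀ : 0 ≤ j) (hj₁ : j ≤ p - 1) (hk₁ : 1 ≤ k)
    (hk₂ : k ≤ p - 1) (hodd : Odd p) :
    2 * (j + k) * p + 2 * (j - k) ≡ 2 * p [ZMOD 2 * p ^ 2 - 2 * p - 2] ↔
      j = (p - 1) / 2 ∧ k = (p + 1) / 2 := by
  obtain ⟨n, rfl⟩ := hodd
  have hp : 3 ≤ 2 * n + 1 := by omega
  rw [modEq_two_mul_iff_dvd]
  constructor
  · intro h
    have hjk : |j - k| < 2 * n + 1 := abs_lt.mpr ⟨by linarith, by linarith⟩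
    rcases Int.eq_zero_or_eq_of_dvd_of_neg_lt_of_lt_two_mul h (neg_lt_mul_add_sub hj₀ hk₁ hk₂ hp)
      (mul_add_sub_lt hj₁ hk₂ hp) with hx | hx
    · have := Int.eq_zero_and_eq_zero_of_mul_add_eq_zero hx hjk
      omega
    · have hjk' : |j - k + 1| < 2 * n + 1 := abs_lt.mpr ⟨by linarith, by linarith⟩
      have := Int.eq_zero_and_eq_zero_of_mul_add_eq_zero
        (a := j + k - (2 * n + 1)) (by linear_combination hx) hjk'
      omega
  · rintro ⟨rfl, rfl⟩
    rw [show (2 * n + 1 - 1) / 2 = n by omega, show (2 * n + 1 + 1) / 2 = n + 1 by omega]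
    exact ⟨1, by ring⟩

end

theorem stmt_12_general (p : ℕ) (hodd : Odd p) :
    ∀ j k : ℤ, 0 ≤ j → j ≤ (p : ℤ) - 1 → 1 ≤ k → k ≤ (p : ℤ) - 1 →
      ((2 * (j + k) * (p : ℤ) + 2 * (j - k) ≡ 2 * (p : ℤ)
          [ZMOD 2 * (p : ℤ) ^ 2 - 2 * (p : ℤ) - 2]) ↔
        (j = ((p : ℤ) - 1) / 2 ∧ k = ((p : ℤ) + 1) / 2)) :=
  fun _ _ hj₀ hj₁ hk₁ hk₂ => modEq_two_mul_iff_of_odd hj₀ hj₁ hk₁ hk₂ hodd.natCast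

/-- For p ≥ 7 odd prime: for 0 ≤ j ≤ p − 1 and 1 ≤ k ≤ p − 1, the congruence
2(j + k)p + 2(j − k) ≡ 2p (mod 2p² − 2p − 2) holds iff j = (p − 1)/2 and k = (p + 1)/2. -/
theorem stmt_12 (p : ℕ) (hp : Nat.Prime p) (hodd : Odd p) (hp7 : 7 ≤ p) :
    ∀ j k : ℤ, 0 ≤ j → j ≤ (p : ℤ) - 1 → 1 ≤ k → k ≤ (p : ℤ) - 1 →
      ((2 * (j + k) * (p : ℤ) + 2 * (j - k) ≡ 2 * (p : ℤ)
          [ZMOD 2 * (p : ℤ) ^ 2 - 2 * (p : ℤ) - 2]) ↔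
        (j = ((p : ℤ) - 1) / 2 ∧ k = ((p : ℤ) + 1) / 2)) :=
  stmt_12_general p hodd
end
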